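/- Let x be the n×n traceless matrix with diagonal entries x_{ii} = p_i (where Σ p_i = 0) and off-diagonal entries x_{ij} = (μ'_{ij} + (h_j/h_i) μ_{ij})/((h_j/h_i) - (h_i/h_j)) for i ≠ j, where h_1,…,h_n are nonzero scalars with h_i² ≠ h_j² for i ≠ j, and μ_{ij}, μ'_{ij} are scalars satisfying μ_{ji} = -μ_{ij} and μ'_{ji} = -μ'_{ij}. Then (1/2) tr(x²) = (1/2) Σ_i p_i² + Σ_{i<j} ((h_i/h_j) μ_{ij} + μ'_{ij})((h_j/h_i) μ_{ij} + μ'_{ij}) / ((h_i/h_j) - (h_j/h_i))². -/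

import Mathlib

/-! Since tr(x²) = Σᵢ xᵢᵢ² + 2 Σ_{i<j} xᵢⱼ xⱼᵢ, it suffices to compute the products xᵢⱼ xⱼᵢ.
By the antisymmetry of μ and μ', xⱼᵢ = (μ'ᵢⱼ + (hᵢ/hⱼ) μᵢⱼ) / ((hⱼ/hᵢ) - (hᵢ/hⱼ)), which shares its
denominator with xᵢⱼ, so xᵢⱼ xⱼᵢ is exactly the (i, j) summand. -/

open Finset

theorem div_sub_mul_div_sub_swap {K : Type*} [Field K] (a b c d : K) :
    c / (a - b) * (d / (b - a)) = -(c * d) / (b - a) ^ 2 := by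
  rw [div_mul_div_comm, ← neg_sub b a, neg_mul, div_neg, sq, neg_div]

namespace Matrix

variable {ι : Type*} [Fintype ι] [LinearOrder ι]

theorem sum_sum_eq_diag_add_upper_add_lower {M : Type*} [AddCommMonoid M] (f : ι → ι → M) :
    ∑ i, ∑ j, f i j = ∑ i, f i i + ∑ i, ∑ j, (if i < j then f i j else 0)
      + ∑ i, ∑ j, (if j < i then f i j else 0) := by
  have hsplit : ∀ i j, f i j = (if i = j then f i j else 0) + (if i < j then f i j else 0)
      + (if j < i then f i j else 0) := by
    intro i j
    rcases lt_trichotomy i j with hij | rfl | hji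
    · simp [hij, hij.ne, hij.not_gt]
    · simp
    · simp [hji, hji.ne', hji.not_gt]
  conv_lhs => enter [2, i, 2, j]; rw [hsplit i j]
  simp only [sum_add_distrib, sum_ite_eq, mem_univ, if_true]

theorem trace_mul_self_eq {R : Type*} [CommSemiring R] (x : Matrix ι ι R) :
    (x * x).trace = ∑ i, x i i ^ 2 + 2 * ∑ i, ∑ j, (if i < j then x i j * x j i else 0) := by
  have hlower : ∑ i, ∑ j, (if j < i then x i j * x j i else 0)
      = ∑ i, ∑ j, (if i < j then x i j * x j i else 0) := by
    rw [sum_comm]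
    exact sum_congr rfl fun i _ => sum_congr rfl fun j _ => by rw [mul_comm]
  simp only [trace, diag, mul_apply]
  rw [sum_sum_eq_diag_add_upper_add_lower, hlower]
  simp only [sq]
  ring

end Matrix

open Finset in
theorem stmt_3_general {n : ℕ} (p h : Fin n → ℂ) (μ μ' : Fin n → Fin n → ℂ)
    (hμ : ∀ i j, μ j i = -μ i j) (hμ' : ∀ i j, μ' j i = -μ' i j)
    (x : Matrix (Fin n) (Fin n) ℂ)
    (hxd : ∀ i, x i i = p i)
    (hxo : ∀ i j, i ≠ j →
      x i j = (μ' i j + (h j / h i) * μ i j) / ((h j / h i) - (h i / h j))) :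
    (1 / 2 : ℂ) * (x * x).trace =
      (1 / 2 : ℂ) * ∑ i, (p i) ^ 2 +
        ∑ i, ∑ j, (if i < j then
          ((h i / h j) * μ i j + μ' i j) * ((h j / h i) * μ i j + μ' i j) /
            ((h i / h j) - (h j / h i)) ^ 2 else 0) := by
  rw [Matrix.trace_mul_self_eq, mul_add, ← mul_assoc, one_div, inv_mul_cancel₀ two_ne_zero, one_mul]
  simp only [hxd]
  congr 1
  refine sum_congr rfl fun i _ => sum_congr rfl fun j _ => ite_congr rfl (fun hij => ?_) fun _ => rfl
  rw [hxo i j hij.ne, hxo j i hij.ne', hμ, hμ', div_sub_mul_div_sub_swap]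
  congr 1
  ring

open Finset in
/-- the quadratic spin Calogero-Moser Hamiltonian
(1/2)tr(x²) for the Chevalley-involution Lax matrix of SL_n. -/
theorem stmt_3 {n : ℕ} (p h : Fin n → ℂ) (μ μ' : Fin n → Fin n → ℂ)
    (hp : ∑ i, p i = 0)
    (hh : ∀ i, h i ≠ 0)
    (hh2 : ∀ i j, i ≠ j → h i ^ 2 ≠ h j ^ 2)
    (hμ : ∀ i j, μ j i = -μ i j) (hμ' : ∀ i j, μ' j i = -μ' i j)
    (x : Matrix (Fin n) (Fin n) ℂ)
    (hxd : ∀ i, x i i = p i)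
    (hxo : ∀ i j, i ≠ j →
      x i j = (μ' i j + (h j / h i) * μ i j) / ((h j / h i) - (h i / h j))) :
    (1 / 2 : ℂ) * (x * x).trace =
      (1 / 2 : ℂ) * ∑ i, (p i) ^ 2 +
        ∑ i, ∑ j, (if i < j then
          ((h i / h j) * μ i j + μ' i j) * ((h j / h i) * μ i j + μ' i j) /
            ((h i / h j) - (h j / h i)) ^ 2 else 0) :=
  stmt_3_general p h μ μ' hμ hμ' x hxd hxo
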